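/- The distribution π defined by π(0) = (2η−1)/(2η) and π(n) = π(−n) = ((2η−1)/(4η(1−η)))·((1−η)/η)^{|n|} for n ≠ 0 is a stationary distribution of the Efron imbalance Markov chain: it is a probability distribution and satisfies the balance equations πᵀP = πᵀ. -/
import Mathlib


/-- One-step transition probabilities of the treatment–control imbalance Markov chain
under Efron's biased coin design with parameter `η`. -/
noncomputable def efronTrans (η : ℝ) (i j : ℤ) : ℝ :=
  if 0 < i then (if j = i + 1 then 1 - η else if j = i - 1 then η else 0)
  else if i < 0 then (if j = i + 1 then η else if j = i - 1 then 1 - η else 0)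
  else (if j = 1 ∨ j = -1 then 1 / 2 else 0)

/-- The candidate stationary distribution of the Efron imbalance chain. -/
noncomputable def efronPi (η : ℝ) (n : ℤ) : ℝ :=
  if n = 0 then (2 * η - 1) / (2 * η)
  else ((2 * η - 1) / (4 * η * (1 - η))) * ((1 - η) / η) ^ n.natAbs

/-- `efronPi η` is a stationary distribution of the Efron imbalance Markov chain:
it is a probability distribution on `ℤ` and satisfies the balance equations
`π(n) = ∑_m π(m)·p_{m,n}`. -/
theorem efron_stationary_distribution (η : ℝ) (hη : η ∈ Set.Ioo (1 / 2 : ℝ) 1) :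
    (∀ n : ℤ, 0 ≤ efronPi η n) ∧
    HasSum (efronPi η) 1 ∧
    (∀ n : ℤ, efronPi η n = ∑' m : ℤ, efronPi η m * efronTrans η m n) := by
  obtain ⟨hη1, hη2⟩ := hη
  have hη0 : (0:ℝ) < η := by linarith
  have h1η : (0:ℝ) < 1 - η := by linarith
  have h2η : (0:ℝ) < 2 * η - 1 := by linarith
  have hr0 : (0:ℝ) ≤ (1 - η) / η := by positivity
  have hr1 : (1 - η) / η < 1 := by rw [div_lt_one hη0]; linarith
  have hc0 : (0:ℝ) ≤ (2 * η - 1) / (4 * η * (1 - η)) := by positivity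
  set r : ℝ := (1 - η) / η with hr_def
  set c : ℝ := (2 * η - 1) / (4 * η * (1 - η)) with hc_def
  have hηne : η ≠ 0 := ne_of_gt hη0
  have h1ηne : (1:ℝ) - η ≠ 0 := ne_of_gt h1η
  have h2ηne : 2 * η - 1 ≠ 0 := ne_of_gt h2η
  have h1r : (1:ℝ) - r ≠ 0 := by
    have : 0 < 1 - r := by linarith
    linarith
  refine ⟨?_, ?_, ?_⟩
  · intro n
    rw [efronPi]
    split
    · positivity
    · positivity
  · -- summability
    have hgeo : HasSum (fun n : ℕ => c * r ^ (n + 1)) (c * r / (1 - r)) := by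
      have h := (hasSum_geometric_of_lt_one hr0 hr1).mul_left (c * r)
      have heq : (fun n : ℕ => c * r ^ (n + 1)) = fun n : ℕ => c * r * r ^ n := by
        funext n; ring
      rw [heq, div_eq_mul_inv]
      exact h
    have hpos : HasSum (fun n : ℕ => efronPi η (n : ℤ))
        (c * r / (1 - r) + (2 * η - 1) / (2 * η)) := by
      have hshift : (fun n : ℕ => efronPi η ((n + 1 : ℕ) : ℤ)) =
          fun n : ℕ => c * r ^ (n + 1) := by
        funext n
        have h1 : ((n + 1 : ℕ) : ℤ) ≠ 0 := by omega
        have h2 : ((n + 1 : ℕ) : ℤ).natAbs = n + 1 := by omega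
        rw [efronPi, if_neg h1, h2]
      have := (hasSum_nat_add_iff (f := fun n : ℕ => efronPi η (n : ℤ)) 1).mp
        (by rw [show (fun n : ℕ => efronPi η ((n + 1 : ℕ) : ℤ)) = _ from hshift]; exact hgeo)
      simpa [efronPi] using this
    have hneg : HasSum (fun n : ℕ => efronPi η (-((n : ℤ) + 1))) (c * r / (1 - r)) := by
      have heq : (fun n : ℕ => efronPi η (-((n : ℤ) + 1))) = fun n : ℕ => c * r ^ (n + 1) := by
        funext n
        have h1 : -((n : ℤ) + 1) ≠ 0 := by omega
        have h2 : (-((n : ℤ) + 1)).natAbs = n + 1 := by omega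
        rw [efronPi, if_neg h1, h2]
      rw [heq]; exact hgeo
    have htot := hpos.of_nat_of_neg_add_one hneg
    have hval : c * r / (1 - r) + (2 * η - 1) / (2 * η) + c * r / (1 - r) = 1 := by
      have h1 : 1 - r = (2 * η - 1) / η := by rw [hr_def]; field_simp; ring
      have hcr : c * r / (1 - r) = 1 / (4 * η) := by
        rw [hc_def, hr_def, h1]
        field_simp
      rw [hcr]
      field_simp
      ring
    rwa [hval] at htot
  · intro n
    have hsupp : ∀ m : ℤ, m ∉ ({n - 1, n + 1} : Finset ℤ) →
        efronPi η m * efronTrans η m n = 0 := by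
      intro m hm
      simp only [Finset.mem_insert, Finset.mem_singleton, not_or] at hm
      have ht : efronTrans η m n = 0 := by
        rw [efronTrans]
        split_ifs <;> first | rfl | (exfalso; omega)
      rw [ht, mul_zero]
    have hpair : (n - 1 : ℤ) ≠ n + 1 := by omega
    rw [tsum_eq_sum (s := {n - 1, n + 1}) hsupp, Finset.sum_pair hpair]
    have key : r = (1 - η) + r ^ 2 * η := by
      rw [hr_def]; field_simp; ring
    by_cases h0 : n = 0
    · subst h0
      norm_num [efronPi, efronTrans]
      field_simp
      ring
    by_cases h1 : n = 1
    · subst h1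
      norm_num [efronPi, efronTrans]
      field_simp
      ring
    by_cases hm1 : n = -1
    · subst hm1
      norm_num [efronPi, efronTrans]
      field_simp
      ring
    by_cases h2 : 2 ≤ n
    · -- n ≥ 2
      have e1 : efronTrans η (n - 1) n = 1 - η := by
        rw [efronTrans, if_pos (by omega : (0:ℤ) < n - 1), if_pos (by omega : n = n - 1 + 1)]
      have e2 : efronTrans η (n + 1) n = η := by
        rw [efronTrans, if_pos (by omega : (0:ℤ) < n + 1),
          if_neg (by omega : ¬ n = n + 1 + 1), if_pos (by omega : n = n + 1 - 1)]
      obtain ⟨k, hk⟩ : ∃ k : ℕ, (n - 1).natAbs = k := ⟨_, rfl⟩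
      have a1 : efronPi η (n - 1) = c * r ^ k := by
        rw [efronPi, if_neg (by omega : ¬ (n - 1 : ℤ) = 0), hk]
      have a2 : efronPi η n = c * r ^ (k + 1) := by
        rw [efronPi, if_neg (by omega : ¬ n = 0), show n.natAbs = k + 1 by omega]
      have a3 : efronPi η (n + 1) = c * r ^ (k + 2) := by
        rw [efronPi, if_neg (by omega : ¬ (n + 1 : ℤ) = 0),
          show (n + 1).natAbs = k + 2 by omega]
      rw [a1, a2, a3, e1, e2]
      linear_combination (c * r ^ k) * key
    · -- n ≤ -2
      have hn2 : n ≤ -2 := by omega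
      have e1 : efronTrans η (n - 1) n = η := by
        rw [efronTrans, if_neg (by omega : ¬ (0:ℤ) < n - 1),
          if_pos (by omega : (n - 1 : ℤ) < 0), if_pos (by omega : n = n - 1 + 1)]
      have e2 : efronTrans η (n + 1) n = 1 - η := by
        rw [efronTrans, if_neg (by omega : ¬ (0:ℤ) < n + 1),
          if_pos (by omega : (n + 1 : ℤ) < 0),
          if_neg (by omega : ¬ n = n + 1 + 1), if_pos (by omega : n = n + 1 - 1)]
      obtain ⟨k, hk⟩ : ∃ k : ℕ, (n + 1).natAbs = k := ⟨_, rfl⟩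
      have a1 : efronPi η (n + 1) = c * r ^ k := by
        rw [efronPi, if_neg (by omega : ¬ (n + 1 : ℤ) = 0), hk]
      have a2 : efronPi η n = c * r ^ (k + 1) := by
        rw [efronPi, if_neg (by omega : ¬ n = 0), show n.natAbs = k + 1 by omega]
      have a3 : efronPi η (n - 1) = c * r ^ (k + 2) := by
        rw [efronPi, if_neg (by omega : ¬ (n - 1 : ℤ) = 0),
          show (n - 1).natAbs = k + 2 by omega]
      rw [a1, a2, a3, e1, e2]
      linear_combination (c * r ^ k) * key
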